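/- Let E be a phase observable with phase matrix (c_{n,m}), i.e. E(X) = ∑_{n,m} c_{n,m} (1/(2π)) ∫_X e^{i(n−m)x} dx |n⟩⟨m| on a Hilbert space with orthonormal basis (|n⟩). If E(X)E(Y) = E(Y)E(X) for all Borel sets X, Y ⊆ [0,2π), then c_{n,m} = 0 for all n ≠ m, i.e. E is the trivial phase E_triv(X) = (ℓ(X)/(2π))·I. -/

import Mathlib

/-!
Fix `n`, a step `p > 0`, and put `X = [0, t)`, `Y = [0, s)`. Expanding in the basis, the diagonal
entry `⟨n|[E(X), E(Y)]|n⟩` is `∑ₖ |c_{n,k}|² K_{n-k}(s, t)`, where `K = phaseCommutator` is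
built from the primitives `(1/2π) ∫₀ᵗ e^{iqx} dx` and is `O((n-k)⁻²)` uniformly in `t`. As a
function of `t` this sum vanishes identically, so its `e^{ipt}`-Fourier coefficient vanishes too;
only `k = n ± p` contribute, and with `s = π/p` this gives `|c_{n,n+p}|² = |c_{n-p,n}|²` (read as
`0` when `n < p`). Strong induction on `n` then kills every `c_{n,n+p}`.
-/

open MeasureTheory Complex

/-- `phaseInt X n m = (1/2π) ∫_X e^{i(n-m)x} dx`. -/
noncomputable def phaseInt (X : Set ℝ) (n m : ℕ) : ℂ :=
  ((1 / (2 * Real.pi) : ℝ) : ℂ) *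
    ∫ x in X, Complex.exp (Complex.I * ((n : ℂ) - (m : ℂ)) * (x : ℂ))

open Real Set ComplexConjugate

noncomputable def phasePrimitive (q : ℤ) (t : ℝ) : ℂ :=
  if q = 0 then t / (2 * π) else (cexp (I * q * t) - 1) / (2 * π * (I * q))

lemma I_mul_intCast_ne_zero {q : ℤ} (hq : q ≠ 0) : I * q ≠ 0 :=
  mul_ne_zero I_ne_zero (Int.cast_ne_zero.mpr hq)

lemma phaseInt_Ico {t : ℝ} (ht : 0 ≤ t) (n m : ℕ) :
    phaseInt (Ico 0 t) n m = phasePrimitive (n - m) t := by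
  have hcast : (n : ℂ) - m = ((n - m : ℤ) : ℂ) := by push_cast; ring
  rw [phaseInt, setIntegral_congr_set Ico_ae_eq_Ioc, ← intervalIntegral.integral_of_le ht, hcast,
    phasePrimitive]
  split_ifs with hq
  · simp only [hq, Int.cast_zero, mul_zero, zero_mul, Complex.exp_zero,
      intervalIntegral.integral_const, sub_zero, real_smul, mul_one]
    push_cast
    ring
  · rw [integral_exp_mul_complex (I_mul_intCast_ne_zero hq)]
    simp only [ofReal_div, ofReal_one, ofReal_mul, ofReal_ofNat, ofReal_zero, mul_zero,
      Complex.exp_zero]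
    ring

lemma continuous_phasePrimitive (q : ℤ) : Continuous (phasePrimitive q) := by
  unfold phasePrimitive
  split_ifs <;> fun_prop

lemma norm_phasePrimitive_le {q : ℤ} (hq : q ≠ 0) (t : ℝ) :
    ‖phasePrimitive q t‖ ≤ 1 / (π * |(q : ℝ)|) := by
  have hnum : ‖cexp (I * q * t) - 1‖ ≤ 2 := by
    calc ‖cexp (I * q * t) - 1‖ ≤ ‖cexp (I * q * t)‖ + ‖(1 : ℂ)‖ := norm_sub_le _ _
      _ = 2 := by
        rw [show I * q * t = ((q * t : ℝ) : ℂ) * I by push_cast; ring, norm_exp_ofReal_mul_I]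
        norm_num
  have hden : ‖2 * π * (I * q)‖ = 2 * π * |(q : ℝ)| := by
    simp [abs_of_pos pi_pos]
  have hq' : 0 < |(q : ℝ)| := abs_pos.mpr (Int.cast_ne_zero.mpr hq)
  rw [phasePrimitive, if_neg hq, norm_div, hden]
  calc ‖cexp (I * q * t) - 1‖ / (2 * π * |(q : ℝ)|) ≤ 2 / (2 * π * |(q : ℝ)|) := by gcongr
    _ = 1 / (π * |(q : ℝ)|) := by field_simp

lemma integral_exp_int_mul_I {q : ℤ} (hq : q ≠ 0) :
    ∫ t in (0 : ℝ)..2 * π, cexp (I * q * t) = 0 := by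
  rw [integral_exp_mul_complex (I_mul_intCast_ne_zero hq),
    show I * q * ((2 * π : ℝ) : ℂ) = q * (2 * π * I) by push_cast; ring, exp_int_mul_two_pi_mul_I]
  simp

lemma integral_exp_mul_phasePrimitive {p q : ℤ} (hp : p ≠ 0) (hq : q ≠ 0) :
    ∫ t in (0 : ℝ)..2 * π, cexp (I * p * t) * phasePrimitive q t =
      if q = -p then I / p else 0 := by
  have hsplit : ∀ t : ℝ, cexp (I * p * t) * phasePrimitive q t =
      (cexp (I * (p + q : ℤ) * t) - cexp (I * p * t)) / (2 * π * (I * q)) := by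
    intro t
    rw [phasePrimitive, if_neg hq, mul_div_assoc', mul_sub, mul_one, ← Complex.exp_add]
    push_cast
    ring_nf
  simp_rw [hsplit]
  rw [intervalIntegral.integral_div, intervalIntegral.integral_sub
    (Continuous.intervalIntegrable (by fun_prop) _ _)
    (Continuous.intervalIntegrable (by fun_prop) _ _), integral_exp_int_mul_I hp]
  split_ifs with hqp
  · subst hqp
    have hp' : (p : ℂ) ≠ 0 := Int.cast_ne_zero.mpr hp
    simp only [add_neg_cancel, Int.cast_zero, mul_zero, zero_mul, Complex.exp_zero,
      intervalIntegral.integral_const, sub_zero, real_smul, ofReal_mul, ofReal_ofNat, mul_one,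
      Int.cast_neg, mul_neg]
    field_simp
    exact I_sq.symm
  · rw [integral_exp_int_mul_I (by omega)]
    simp

noncomputable def phaseCommutator (q : ℤ) (s t : ℝ) : ℂ :=
  phasePrimitive q t * phasePrimitive (-q) s - phasePrimitive q s * phasePrimitive (-q) t

lemma phaseCommutator_zero (s t : ℝ) : phaseCommutator 0 s t = 0 := by
  rw [phaseCommutator, neg_zero]
  ring

lemma norm_phaseCommutator_le (q : ℤ) (s t : ℝ) :
    ‖phaseCommutator q s t‖ ≤ 2 / (π * q) ^ 2 := by
  rcases eq_or_ne q 0 with rfl | hq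
  · simp [phaseCommutator_zero]
  have hb₁ := norm_phasePrimitive_le hq
  have hb₂ : ∀ u, ‖phasePrimitive (-q) u‖ ≤ 1 / (π * |(q : ℝ)|) := by
    simpa using norm_phasePrimitive_le (neg_ne_zero.mpr hq)
  calc ‖phaseCommutator q s t‖
      ≤ ‖phasePrimitive q t‖ * ‖phasePrimitive (-q) s‖ +
          ‖phasePrimitive q s‖ * ‖phasePrimitive (-q) t‖ := by
        rw [phaseCommutator, ← norm_mul, ← norm_mul]
        exact norm_sub_le _ _
    _ ≤ 1 / (π * |(q : ℝ)|) * (1 / (π * |(q : ℝ)|)) +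
          1 / (π * |(q : ℝ)|) * (1 / (π * |(q : ℝ)|)) := by
        have := pi_pos
        exact add_le_add (mul_le_mul (hb₁ t) (hb₂ s) (norm_nonneg _) (by positivity))
          (mul_le_mul (hb₁ s) (hb₂ t) (norm_nonneg _) (by positivity))
    _ = 2 / (π * q) ^ 2 := by
        rw [← sq_abs (π * q), abs_mul, abs_of_pos pi_pos]
        ring

lemma integral_exp_mul_phaseCommutator {p : ℤ} (hp : p ≠ 0) (q : ℤ) (s : ℝ) :
    ∫ t in (0 : ℝ)..2 * π, cexp (I * p * t) * phaseCommutator q s t =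
      if q = -p then I / p * phasePrimitive p s
      else if q = p then -(I / p * phasePrimitive p s) else 0 := by
  rcases eq_or_ne q 0 with rfl | hq
  · simp [phaseCommutator_zero, hp, eq_comm (a := (0 : ℤ))]
  have hsplit : ∀ t : ℝ, cexp (I * p * t) * phaseCommutator q s t =
      phasePrimitive (-q) s * (cexp (I * p * t) * phasePrimitive q t) -
        phasePrimitive q s * (cexp (I * p * t) * phasePrimitive (-q) t) := by
    intro t
    rw [phaseCommutator]
    ring
  have hint : ∀ r, IntervalIntegrable (fun t : ℝ => cexp (I * p * t) * phasePrimitive r t)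
      volume 0 (2 * π) :=
    fun r => ((by fun_prop : Continuous fun t : ℝ => cexp (I * p * t)).mul
      (continuous_phasePrimitive r)).intervalIntegrable _ _
  simp_rw [hsplit]
  rw [intervalIntegral.integral_sub ((hint q).const_mul _) ((hint (-q)).const_mul _),
    intervalIntegral.integral_const_mul, intervalIntegral.integral_const_mul,
    integral_exp_mul_phasePrimitive hp hq, integral_exp_mul_phasePrimitive hp (neg_ne_zero.mpr hq)]
  split_ifs <;> first | omega | (subst_vars; simp <;> ring)

lemma phasePrimitive_pi_div_ne_zero {q : ℤ} (hq : q ≠ 0) : phasePrimitive q (π / q) ≠ 0 := by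
  have hq' : (q : ℂ) ≠ 0 := Int.cast_ne_zero.mpr hq
  rw [phasePrimitive, if_neg hq,
    show I * q * ((π / q : ℝ) : ℂ) = π * I by push_cast; field_simp, exp_pi_mul_I]
  exact div_ne_zero (by norm_num)
    (mul_ne_zero (by simp [pi_ne_zero]) (I_mul_intCast_ne_zero hq))

lemma summable_two_div_pi_mul_sq (n : ℕ) :
    Summable fun k : ℕ => 2 / (π * ((n - k : ℤ) : ℝ)) ^ 2 := by
  have hZ : Summable fun q : ℤ => 2 / (π * q) ^ 2 :=
    ((Real.summable_one_div_int_pow.mpr one_lt_two).mul_left (2 / π ^ 2)).congr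
      fun q => by ring
  exact hZ.comp_injective fun a b h => by simpa using h

lemma HilbertBasis.hasSum_inner_apply_mul_inner {ι 𝕜 E : Type*} [RCLike 𝕜]
    [NormedAddCommGroup E] [InnerProductSpace 𝕜 E] (b : HilbertBasis ι 𝕜 E) (A : E →L[𝕜] E)
    (x v : E) :
    HasSum (fun i => inner 𝕜 x (A (b i)) * inner 𝕜 (b i) v) (inner 𝕜 x (A v)) := by
  have := ((innerSL 𝕜 x).comp A).hasSum (b.hasSum_repr v)
  simpa [b.repr_apply_apply, mul_comm] using this

lemma HilbertBasis.hasSum_inner_commutator_eq_zero {ι 𝕜 E : Type*} [RCLike 𝕜]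
    [NormedAddCommGroup E] [InnerProductSpace 𝕜 E] (b : HilbertBasis ι 𝕜 E) {A B : E →L[𝕜] E}
    (hAB : Commute A B) (x y : E) :
    HasSum (fun i => inner 𝕜 x (A (b i)) * inner 𝕜 (b i) (B y) -
      inner 𝕜 x (B (b i)) * inner 𝕜 (b i) (A y)) 0 := by
  have hBA : A (B y) = B (A y) := congrArg (· y) hAB.eq
  simpa [hBA] using
    (b.hasSum_inner_apply_mul_inner A x (B y)).sub (b.hasSum_inner_apply_mul_inner B x (A y))

lemma hasSum_mul_phaseCommutator_of_commute {H : Type*} [NormedAddCommGroup H]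
    [InnerProductSpace ℂ H] (e : HilbertBasis ℕ ℂ H) (c : ℕ → ℕ → ℂ) {A B : H →L[ℂ] H} {s t : ℝ}
    (hs : 0 ≤ s) (ht : 0 ≤ t)
    (hA : ∀ n m, inner ℂ (e n) (A (e m)) = c n m * phaseInt (Ico 0 t) n m)
    (hB : ∀ n m, inner ℂ (e n) (B (e m)) = c n m * phaseInt (Ico 0 s) n m)
    (hAB : Commute A B) (n : ℕ) :
    HasSum (fun k => c n k * c k n * phaseCommutator (n - k) s t) 0 := by
  have hterm : ∀ k, inner ℂ (e n) (A (e k)) * inner ℂ (e k) (B (e n)) -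
      inner ℂ (e n) (B (e k)) * inner ℂ (e k) (A (e n)) =
        c n k * c k n * phaseCommutator (n - k) s t := by
    intro k
    simp only [hA, hB, phaseInt_Ico ht, phaseInt_Ico hs, phaseCommutator,
      show ((k : ℤ) - n) = -(n - k) by ring]
    ring
  simpa only [hterm] using e.hasSum_inner_commutator_eq_zero hAB (e n) (e n)

lemma hasSum_mul_integral_exp_mul_phaseCommutator {w : ℕ → ℂ} {C : ℝ} (hw : ∀ k, ‖w k‖ ≤ C)
    (n : ℕ) (p : ℤ) (s : ℝ)
    (h : ∀ t ∈ Ioc 0 (2 * π), HasSum (fun k => w k * phaseCommutator (n - k) s t) 0) :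
    HasSum (fun k => w k * ∫ t in (0 : ℝ)..2 * π, cexp (I * p * t) * phaseCommutator (n - k) s t)
      0 := by
  have hC : 0 ≤ C := (norm_nonneg _).trans (hw 0)
  have hI : uIoc 0 (2 * π) = Ioc 0 (2 * π) := uIoc_of_le (by positivity)
  have hcont : ∀ q : ℤ, Continuous fun t : ℝ => cexp (I * p * t) * phaseCommutator q s t := by
    intro q
    unfold phaseCommutator
    have := continuous_phasePrimitive q
    have := continuous_phasePrimitive (-q)
    fun_prop
  have hdom := intervalIntegral.hasSum_integral_of_dominated_convergence (μ := volume)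
    (F := fun k t => w k * (cexp (I * p * t) * phaseCommutator (n - k) s t)) (f := fun _ => 0)
    (fun k _ => C * (2 / (π * ((n - k : ℤ) : ℝ)) ^ 2))
    (fun k => ((hcont _).const_mul (w k)).aestronglyMeasurable)
    (fun k => ae_of_all _ fun t _ => ?_)
    (ae_of_all _ fun _ _ => (summable_two_div_pi_mul_sq n).mul_left C)
    intervalIntegrable_const
    (ae_of_all _ fun t ht => by
      simpa [mul_left_comm (cexp _)] using (h t (hI ▸ ht)).mul_left (cexp (I * p * t)))
  · simpa [intervalIntegral.integral_const_mul] using hdom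
  · rw [norm_mul, norm_mul, show I * p * t = ((p * t : ℝ) : ℂ) * I by push_cast; ring,
      norm_exp_ofReal_mul_I, one_mul]
    exact mul_le_mul (hw k) (norm_phaseCommutator_le _ s t) (norm_nonneg _) hC

lemma eq_zero_of_hasSum_mul_phaseCommutator {w : ℕ → ℂ} {C : ℝ} (hw : ∀ k, ‖w k‖ ≤ C)
    {n p : ℕ} (hp : 0 < p) {s : ℝ} (hs : phasePrimitive p s ≠ 0)
    (h : ∀ t ∈ Ioc 0 (2 * π), HasSum (fun k => w k * phaseCommutator (n - k) s t) 0)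
    (hlow : ∀ k, k + p = n → w k = 0) : w (n + p) = 0 := by
  have hp' : (p : ℤ) ≠ 0 := by omega
  have H := hasSum_mul_integral_exp_mul_phaseCommutator hw n p s h
  simp_rw [integral_exp_mul_phaseCommutator hp'] at H
  have H' := H.unique (hasSum_single (n + p) fun k hk => by
    split_ifs
    · omega
    · rw [hlow k (by omega), zero_mul]
    · rw [mul_zero])
  rw [if_pos (by push_cast; ring)] at H'
  exact (mul_eq_zero.mp H'.symm).resolve_right
    (mul_ne_zero (div_ne_zero I_ne_zero (Int.cast_ne_zero.mpr hp')) hs)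

lemma mul_eq_zero_of_hasSum_mul_phaseCommutator {c : ℕ → ℕ → ℂ} {C : ℝ}
    (hc : ∀ a b, ‖c a b * c b a‖ ≤ C) {p : ℕ} (hp : 0 < p) {s : ℝ} (hs : phasePrimitive p s ≠ 0)
    (h : ∀ n, ∀ t ∈ Ioc 0 (2 * π),
      HasSum (fun k => c n k * c k n * phaseCommutator (n - k) s t) 0) (n : ℕ) :
    c n (n + p) * c (n + p) n = 0 := by
  induction n using Nat.strong_induction_on with
  | _ n ih =>
    refine eq_zero_of_hasSum_mul_phaseCommutator (hc n) hp hs (h n) ?_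
    rintro k rfl
    rw [mul_comm]
    exact ih k (by omega)

theorem stmt10 {H : Type*} [NormedAddCommGroup H] [InnerProductSpace ℂ H]
    (e : HilbertBasis ℕ ℂ H) (ξ : ℕ → H) (hξ : ∀ n, ‖ξ n‖ = 1)
    (c : ℕ → ℕ → ℂ) (hc : ∀ n m, c n m = (inner ℂ (ξ n) (ξ m) : ℂ))
    (E : Set ℝ → (H →L[ℂ] H))
    (hE : ∀ X : Set ℝ, MeasurableSet X → X ⊆ Set.Ico 0 (2 * Real.pi) → ∀ n m : ℕ,
      (inner ℂ (e n) (E X (e m)) : ℂ) = c n m * phaseInt X n m)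
    (hcomm : ∀ X Y : Set ℝ, MeasurableSet X → MeasurableSet Y →
      X ⊆ Set.Ico 0 (2 * Real.pi) → Y ⊆ Set.Ico 0 (2 * Real.pi) →
      (E X).comp (E Y) = (E Y).comp (E X)) :
    ∀ n m : ℕ, n ≠ m → c n m = 0 := by
  have hconj : ∀ a b, c b a = conj (c a b) := fun a b => by rw [hc, hc, inner_conj_symm]
  have hbound : ∀ a b, ‖c a b * c b a‖ ≤ 1 := fun a b => by
    simpa [hc, hξ] using mul_le_mul (norm_inner_le_norm (𝕜 := ℂ) (ξ a) (ξ b))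
      (norm_inner_le_norm (𝕜 := ℂ) (ξ b) (ξ a)) (norm_nonneg _) (by positivity)
  have hIco : ∀ {t}, t ∈ Icc 0 (2 * π) → Ico 0 t ⊆ Ico 0 (2 * π) := fun ht =>
    Ico_subset_Ico_right ht.2
  have hsum : ∀ s ∈ Icc 0 (2 * π), ∀ n, ∀ t ∈ Ioc 0 (2 * π),
      HasSum (fun k => c n k * c k n * phaseCommutator (n - k) s t) 0 := fun s hs n t ht =>
    hasSum_mul_phaseCommutator_of_commute e c hs.1 ht.1.le
      (hE _ measurableSet_Ico (hIco (Ioc_subset_Icc_self ht))) (hE _ measurableSet_Ico (hIco hs))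
      (hcomm _ _ measurableSet_Ico measurableSet_Ico (hIco (Ioc_subset_Icc_self ht)) (hIco hs)) n
  have hweight : ∀ n m, n < m → c n m * c m n = 0 := fun n m hnm => by
    have hp : 0 < m - n := by omega
    have hs : π / (m - n : ℕ) ∈ Icc 0 (2 * π) := ⟨by positivity,
      (div_le_self pi_pos.le (by exact_mod_cast hp)).trans (by linarith [pi_pos])⟩
    have hps : phasePrimitive (m - n : ℕ) (π / (m - n : ℕ)) ≠ 0 := by
      simpa using phasePrimitive_pi_div_ne_zero (q := (m - n : ℕ)) (by omega)
    simpa [Nat.add_sub_cancel' hnm.le] using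
      mul_eq_zero_of_hasSum_mul_phaseCommutator hbound hp hps (hsum _ hs) n
  intro n m hnm
  have hprod : c n m * c m n = 0 := by
    rcases hnm.lt_or_gt with h | h
    · exact hweight n m h
    · rw [mul_comm]; exact hweight m n h
  rwa [hconj n m, mul_conj, ofReal_eq_zero, normSq_eq_zero] at hprod
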